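/- arXiv:2312.05093 — 3 statements merged into one kernel-verified Lean document; each statement's English description precedes it below -/
import Mathlib

section
/- In the 3D cyclic algebra, if υ' ∈ Π with υ' ≠ 0 and υ·υ' = 0, then υ lies on the trisector line t (all its coordinates are equal). -/
/-- The product of the 3D cyclic algebra on `ℝ³`: `e₁` is the identity,
`e₂·e₂ = e₃`, `e₂·e₃ = e₁`, `e₃·e₃ = e₂`. -/
noncomputable def cmul (u v : Fin 3 → ℝ) : Fin 3 → ℝ :=
  ![u 0 * v 0 + u 1 * v 2 + u 2 * v 1,
    u 0 * v 1 + u 1 * v 0 + u 2 * v 2,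
    u 0 * v 2 + u 1 * v 1 + u 2 * v 0]

theorem stmt_7 (υ υ' : Fin 3 → ℝ) (hPlane : υ' 0 + υ' 1 + υ' 2 = 0) (hne : υ' ≠ 0)
    (h : cmul υ υ' = 0) : υ 0 = υ 1 ∧ υ 1 = υ 2 := by
  have h0 := congrFun h 0
  have h1 := congrFun h 1
  have h2 := congrFun h 2
  simp [cmul] at h0 h1 h2
  set a := υ 0; set b := υ 1; set c := υ 2
  set x := υ' 0; set y := υ' 1; set z := υ' 2
  have d1 : (a - b) * (x - y) + (c - b) * (y - z) = 0 := by linear_combination h0 - h1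
  have d2 : (b - c) * (x - y) + (a - c) * (y - z) = 0 := by linear_combination h1 - h2
  by_cases hd : (a - b) ^ 2 + (a - b) * (b - c) + (b - c) ^ 2 = 0
  · constructor
    · nlinarith [sq_nonneg (a - b), sq_nonneg (b - c), sq_nonneg (a - b + (b - c))]
    · nlinarith [sq_nonneg (a - b), sq_nonneg (b - c), sq_nonneg (a - b + (b - c))]
  · exfalso
    have hp : ((a - b) ^ 2 + (a - b) * (b - c) + (b - c) ^ 2) * (x - y) = 0 := by
      linear_combination (a - c) * d1 - (c - b) * d2
    have hq : ((a - b) ^ 2 + (a - b) * (b - c) + (b - c) ^ 2) * (y - z) = 0 := by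
      linear_combination (a - b) * d2 - (b - c) * d1
    have hp' : x - y = 0 := (mul_eq_zero.mp hp).resolve_left hd
    have hq' : y - z = 0 := (mul_eq_zero.mp hq).resolve_left hd
    apply hne
    funext i
    fin_cases i <;> simp <;> linarith
end

section
/- In the 3D cyclic algebra, for any υ', μ ∈ Π with υ' ≠ 0, there exists a unique ω ∈ Π such that ω·υ' = μ. -/
/-!
The cyclic algebra is `ℝ[x]/(x³ - 1) ≅ ℝ × ℂ` via `x ↦ (1, ζ)`, `ζ = e^{2πi/3}`; the first
component is the coordinate sum, so `Π` is the factor `ℂ`. Swapping `e₂` and `e₃` induces complex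
conjugation, hence `v · conj v` acts on `Π` as multiplication by `|v₀ + v₁ζ + v₂ζ²|² = cnorm v`,
which is nonzero for `0 ≠ v ∈ Π`. So `ω = (cnorm υ')⁻¹ • (μ · conj υ')` is the unique solution.
-/

def conj (v : Fin 3 → ℝ) : Fin 3 → ℝ := ![v 0, v 2, v 1]

def cnorm (v : Fin 3 → ℝ) : ℝ :=
  v 0 ^ 2 + v 1 ^ 2 + v 2 ^ 2 - v 0 * v 1 - v 1 * v 2 - v 2 * v 0

lemma cmul_comm (u v : Fin 3 → ℝ) : cmul u v = cmul v u := by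
  funext i
  fin_cases i <;>
    simp only [cmul, Fin.isValue, Fin.zero_eta, Fin.mk_one, Fin.reduceFinMk, Matrix.cons_val_zero,
      Matrix.cons_val_one, Matrix.cons_val] <;> ring

lemma cmul_assoc (u v w : Fin 3 → ℝ) : cmul (cmul u v) w = cmul u (cmul v w) := by
  funext i
  fin_cases i <;>
    simp only [cmul, Fin.isValue, Fin.zero_eta, Fin.mk_one, Fin.reduceFinMk, Matrix.cons_val_zero,
      Matrix.cons_val_one, Matrix.cons_val] <;> ring

lemma smul_cmul (c : ℝ) (u v : Fin 3 → ℝ) : cmul (c • u) v = c • cmul u v := by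
  funext i
  fin_cases i <;>
    simp only [cmul, Pi.smul_apply, smul_eq_mul, Fin.isValue, Fin.zero_eta, Fin.mk_one,
      Fin.reduceFinMk, Matrix.cons_val_zero, Matrix.cons_val_one, Matrix.cons_val] <;> ring

lemma sum_cmul (u v : Fin 3 → ℝ) :
    cmul u v 0 + cmul u v 1 + cmul u v 2 = (u 0 + u 1 + u 2) * (v 0 + v 1 + v 2) := by
  simp only [cmul, Fin.isValue, Matrix.cons_val_zero, Matrix.cons_val_one, Matrix.cons_val]
  ring

lemma cmul_cmul_conj_self {w : Fin 3 → ℝ} (hw : w 0 + w 1 + w 2 = 0) (v : Fin 3 → ℝ) :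
    cmul w (cmul v (conj v)) = cnorm v • w := by
  have hw0 : w 0 = -w 1 - w 2 := by linarith
  funext i
  fin_cases i <;>
    simp only [cmul, conj, cnorm, hw0, Pi.smul_apply, smul_eq_mul, Fin.isValue, Fin.zero_eta,
      Fin.mk_one, Fin.reduceFinMk, Matrix.cons_val_zero, Matrix.cons_val_one, Matrix.cons_val]
      <;> ring

lemma cnorm_ne_zero {v : Fin 3 → ℝ} (hv : v 0 + v 1 + v 2 = 0) (hne : v ≠ 0) :
    cnorm v ≠ 0 := by
  contrapose! hne
  have hsq : v 0 ^ 2 + v 1 ^ 2 + v 2 ^ 2 = 0 := by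
    unfold cnorm at hne
    linear_combination (2 / 3) * hne + (1 / 3) * (v 0 + v 1 + v 2) * hv
  have h0 : v 0 = 0 := by nlinarith [sq_nonneg (v 0), sq_nonneg (v 1), sq_nonneg (v 2)]
  have h1 : v 1 = 0 := by nlinarith [sq_nonneg (v 0), sq_nonneg (v 1), sq_nonneg (v 2)]
  have h2 : v 2 = 0 := by linarith
  funext i
  fin_cases i <;> assumption

theorem stmt_8 (υ' μ : Fin 3 → ℝ) (hυ' : υ' 0 + υ' 1 + υ' 2 = 0) (hne : υ' ≠ 0)
    (hμ : μ 0 + μ 1 + μ 2 = 0) :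
    ∃! ω : Fin 3 → ℝ, (ω 0 + ω 1 + ω 2 = 0) ∧ cmul ω υ' = μ := by
  have hN : cnorm υ' ≠ 0 := cnorm_ne_zero hυ' hne
  refine ⟨(cnorm υ')⁻¹ • cmul μ (conj υ'), ⟨?_, ?_⟩, ?_⟩
  · simp only [Pi.smul_apply, smul_eq_mul]
    rw [← mul_add, ← mul_add, sum_cmul, hμ, zero_mul, mul_zero]
  · rw [smul_cmul, cmul_assoc, cmul_comm (conj υ'), cmul_cmul_conj_self hμ, smul_smul,
      inv_mul_cancel₀ hN, one_smul]
  · rintro ω ⟨hω, rfl⟩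
    rw [cmul_assoc, cmul_cmul_conj_self hω, smul_smul, inv_mul_cancel₀ hN, one_smul]
end

section
/- Let F: R^3 → R^3 with components F^i twice continuously differentiable, and suppose there exists a twice continuously differentiable G: R^3 → R^3 such that F_x = G · a, F_y = G · b, F_z = G · c pointwise, where · is the cyclic algebra product and a = (-1,1,0), b = (-1,0,1), c = (0,-1,1). Then each component F^i is harmonic: F^i_xx + F^i_yy + F^i_zz = 0. -/
noncomputable def cmulL (v : Fin 3 → ℝ) : (Fin 3 → ℝ) →L[ℝ] (Fin 3 → ℝ) :=
  LinearMap.toContinuousLinearMap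
  { toFun := fun u => cmul u v
    map_add' := by
      intro u w; funext i; fin_cases i <;> simp [cmul] <;> ring
    map_smul' := by
      intro r u; funext i; fin_cases i <;> simp [cmul] <;> ring }

lemma fderiv_cmul (G : (Fin 3 → ℝ) → (Fin 3 → ℝ)) (hG : Differentiable ℝ G)
    (v : Fin 3 → ℝ) (p w : Fin 3 → ℝ) :
    fderiv ℝ (fun q => cmul (G q) v) p w = cmul (fderiv ℝ G p w) v := by
  have h : HasFDerivAt (fun q => cmulL v (G q)) ((cmulL v).comp (fderiv ℝ G p)) p :=
    (cmulL v).hasFDerivAt.comp p (hG p).hasFDerivAt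
  have : fderiv ℝ (fun q => cmul (G q) v) p = (cmulL v).comp (fderiv ℝ G p) := h.fderiv
  rw [this]; rfl

/-- If `F` is φ𝔸-differentiable with derivative `G`, and `G` in turn with derivative `G'`,
for the affine map with matrix columns `a = (-1,1,0)`, `b = (-1,0,1)`, `c = (0,-1,1)`,
then each component of `F` is harmonic. -/
theorem stmt_16 (F G G' : (Fin 3 → ℝ) → (Fin 3 → ℝ))
    (hF : ContDiff ℝ 2 F) (hG : ContDiff ℝ 2 G)
    (hFx : ∀ p, fderiv ℝ F p ![1, 0, 0] = cmul (G p) ![-1, 1, 0])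
    (hFy : ∀ p, fderiv ℝ F p ![0, 1, 0] = cmul (G p) ![-1, 0, 1])
    (hFz : ∀ p, fderiv ℝ F p ![0, 0, 1] = cmul (G p) ![0, -1, 1])
    (hGx : ∀ p, fderiv ℝ G p ![1, 0, 0] = cmul (G' p) ![-1, 1, 0])
    (hGy : ∀ p, fderiv ℝ G p ![0, 1, 0] = cmul (G' p) ![-1, 0, 1])
    (hGz : ∀ p, fderiv ℝ G p ![0, 0, 1] = cmul (G' p) ![0, -1, 1]) :
    ∀ p (i : Fin 3),
      fderiv ℝ (fun q => fderiv ℝ F q ![1, 0, 0]) p ![1, 0, 0] i +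
        fderiv ℝ (fun q => fderiv ℝ F q ![0, 1, 0]) p ![0, 1, 0] i +
        fderiv ℝ (fun q => fderiv ℝ F q ![0, 0, 1]) p ![0, 0, 1] i = 0 := by
  intro p i
  have hGd : Differentiable ℝ G := hG.differentiable (by norm_num)
  have e1 : (fun q => fderiv ℝ F q ![1, 0, 0]) = fun q => cmul (G q) ![-1, 1, 0] :=
    funext hFx
  have e2 : (fun q => fderiv ℝ F q ![0, 1, 0]) = fun q => cmul (G q) ![-1, 0, 1] :=
    funext hFy
  have e3 : (fun q => fderiv ℝ F q ![0, 0, 1]) = fun q => cmul (G q) ![0, -1, 1] :=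
    funext hFz
  rw [e1, e2, e3, fderiv_cmul G hGd, fderiv_cmul G hGd, fderiv_cmul G hGd,
    hGx, hGy, hGz]
  fin_cases i <;> simp [cmul] <;> ring
end
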